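/- arXiv:1907.09101 — 4 statements merged into one kernel-verified Lean document; each statement's English description precedes it below -/
import Mathlib

section
/- If {⇆_a}_{a ∈ A∪{alt}} is an agent-alternating bisimulation family between Kripke models M and N, then for every agent a, u ⇆_a v implies that M,u and N,v satisfy exactly the same formulas of the fragment L_{-a}, and u ⇆_{alt} v implies that M,u and N,v satisfy exactly the same formulas of L_alt. -/
/-- Formulas of the multi-agent modal language: p | ¬φ | (φ ∧ φ) | □_a φ. -/
inductive Fm (A : Type) : Type
  | atom : ℕ → Fm A
  | neg : Fm A → Fm A
  | and : Fm A → Fm A → Fm A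
  | box : A → Fm A → Fm A

namespace Fm
def imp {A : Type} (φ ψ : Fm A) : Fm A := .neg (.and φ (.neg ψ))
def or {A : Type} (φ ψ : Fm A) : Fm A := .neg (.and (.neg φ) (.neg ψ))
def dia {A : Type} (a : A) (φ : Fm A) : Fm A := .neg (.box a (.neg φ))
end Fm

/-- Kripke models with agent set `A` and world type `W`. -/
structure Kripke (A W : Type) where
  R : A → W → W → Prop
  V : ℕ → W → Prop

/-- Satisfaction. -/
def Sat {A W : Type} (M : Kripke A W) : W → Fm A → Prop
  | w, .atom n => M.V n w
  | w, .neg φ => ¬ Sat M w φ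
  | w, .and φ ψ => Sat M w φ ∧ Sat M w ψ
  | w, .box a φ => ∀ v, M.R a w v → Sat M v φ

/-- The fragments L_{-a}: φ ::= p | □_x ψ (x ≠ a, ψ ∈ L_{-x}) | ¬φ | (φ ∧ φ). -/
inductive LMinus {A : Type} : A → Fm A → Prop
  | atom (a : A) (n : ℕ) : LMinus a (.atom n)
  | box {a x : A} {ψ : Fm A} : x ≠ a → LMinus x ψ → LMinus a (.box x ψ)
  | neg {a : A} {φ : Fm A} : LMinus a φ → LMinus a (.neg φ)
  | and {a : A} {φ ψ : Fm A} : LMinus a φ → LMinus a ψ → LMinus a (.and φ ψ)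

/-- The agent-alternating fragment L_alt. -/
inductive LAlt {A : Type} : Fm A → Prop
  | atom (n : ℕ) : LAlt (.atom n)
  | chi {φ : Fm A} (a : A) : LMinus a φ → LAlt φ
  | neg {φ : Fm A} : LAlt φ → LAlt (.neg φ)
  | and {φ ψ : Fm A} : LAlt φ → LAlt ψ → LAlt (.and φ ψ)

/-- The fragments L_X for X ⊆ A: φ ::= p | □_x ψ (x ∈ X, ψ ∈ L_{X\{x}}) | ¬φ | (φ ∧ φ). -/
inductive LX {A : Type} : Set A → Fm A → Prop
  | atom (X : Set A) (n : ℕ) : LX X (.atom n)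
  | box {X : Set A} {x : A} {ψ : Fm A} : x ∈ X → LX (X \ {x}) ψ → LX X (.box x ψ)
  | neg {X : Set A} {φ : Fm A} : LX X φ → LX X (.neg φ)
  | and {X : Set A} {φ ψ : Fm A} : LX X φ → LX X ψ → LX X (.and φ ψ)

/-- Immediate subformula relation. -/
inductive ISub {A : Type} : Fm A → Fm A → Prop
  | neg (φ : Fm A) : ISub φ (.neg φ)
  | andL (φ ψ : Fm A) : ISub φ (.and φ ψ)
  | andR (φ ψ : Fm A) : ISub ψ (.and φ ψ)
  | box (a : A) (φ : Fm A) : ISub φ (.box a φ)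

/-- An occurrence type of φ: a nonempty sequence of formulas, each an immediate
subformula of the next, ending in φ. -/
def IsOcc {A : Type} (l : List (Fm A)) (φ : Fm A) : Prop :=
  l ≠ [] ∧ l.getLast? = some φ ∧ List.Chain' ISub l

/-- A □_a-occurrence of φ. -/
def IsBoxOcc {A : Type} (a : A) (l : List (Fm A)) (φ : Fm A) : Prop :=
  IsOcc l φ ∧ ∃ β, l.head? = some (Fm.box a β)

/-- O ≤ O' iff O' is a suffix of O (prefix-extension order on occurrences). -/
def OccLe {A : Type} (O O' : List (Fm A)) : Prop := O' <:+ O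

/-- φ is agent-alternating: between any two nested □_a-occurrences there is a
□_b-occurrence for some b ≠ a. -/
def AgentAlternating {A : Type} (φ : Fm A) : Prop :=
  ∀ (a : A) (O O' : List (Fm A)), IsBoxOcc a O φ → IsBoxOcc a O' φ → O ≠ O' → OccLe O O' →
    ∃ b : A, b ≠ a ∧ ∃ O'' : List (Fm A), IsBoxOcc b O'' φ ∧ OccLe O O'' ∧ OccLe O'' O'

/-- φ is agent-nonrepeating: no □_a-occurrence lies below another □_a-occurrence. -/
def AgentNonrepeating {A : Type} (φ : Fm A) : Prop :=
  ∀ (a : A) (O O' : List (Fm A)), IsBoxOcc a O φ → IsBoxOcc a O' φ → O ≠ O' → ¬ OccLe O O'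

/-- Boolean evaluation treating atoms and boxed formulas as atomic. -/
def evalP {A : Type} (v : Fm A → Bool) : Fm A → Bool
  | .neg φ => ! evalP v φ
  | .and φ ψ => evalP v φ && evalP v ψ
  | φ => v φ

/-- Propositional tautologies (in the signature ¬, ∧, with boxed formulas atomic). -/
def Taut {A : Type} (φ : Fm A) : Prop := ∀ v : Fm A → Bool, evalP v φ = true

/-- Provability in the smallest normal modal logic containing the axioms `Ax`. -/
inductive Prv {A : Type} (Ax : Fm A → Prop) : Fm A → Prop
  | taut {φ : Fm A} : Taut φ → Prv Ax φ
  | ax {φ : Fm A} : Ax φ → Prv Ax φ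
  | k (a : A) (φ ψ : Fm A) :
      Prv Ax (Fm.imp (.box a (Fm.imp φ ψ)) (Fm.imp (.box a φ) (.box a ψ)))
  | mp {φ ψ : Fm A} : Prv Ax (Fm.imp φ ψ) → Prv Ax φ → Prv Ax ψ
  | nec {φ : Fm A} (a : A) : Prv Ax φ → Prv Ax (.box a φ)

def AxNone {A : Type} : Fm A → Prop := fun _ => False
def AxT {A : Type} : Fm A → Prop := fun χ => ∃ (a : A) (φ : Fm A), χ = Fm.imp (.box a φ) φ
def Ax4 {A : Type} : Fm A → Prop := fun χ => ∃ (a : A) (φ : Fm A), χ = Fm.imp (.box a φ) (.box a (.box a φ))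
def Ax5 {A : Type} : Fm A → Prop := fun χ => ∃ (a : A) (φ : Fm A), χ = Fm.imp (.neg (.box a φ)) (.box a (.neg (.box a φ)))
def AxB {A : Type} : Fm A → Prop := fun χ => ∃ (a : A) (φ : Fm A), χ = Fm.imp φ (.box a (Fm.dia a φ))
def AxD {A : Type} : Fm A → Prop := fun χ => ∃ (a : A) (φ : Fm A), χ = Fm.imp (.box a φ) (Fm.dia a φ)

def Ser {W : Type} (R : W → W → Prop) : Prop := ∀ u, ∃ v, R u v
def Eucl {W : Type} (R : W → W → Prop) : Prop := ∀ u v w, R u v → R u w → R v w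

/-- Agent-alternating bisimulation family (`none` plays the role of `alt`). -/
def IsAAFamily {A W1 W2 : Type} (M : Kripke A W1) (N : Kripke A W2)
    (f : Option A → W1 → W2 → Prop) : Prop :=
  ∀ (o : Option A) (u : W1) (v : W2), f o u v →
    (∀ n, M.V n u ↔ N.V n v) ∧
    (∀ b : A, o ≠ some b →
      (∀ u', M.R b u u' → ∃ v', N.R b v v' ∧ f (some b) u' v') ∧
      (∀ v', N.R b v v' → ∃ u', M.R b u u' ∧ f (some b) u' v'))

/-- Agent-nonrepeating bisimulation family. -/
def IsNRFamily {A W1 W2 : Type} (M : Kripke A W1) (N : Kripke A W2)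
    (f : Set A → W1 → W2 → Prop) : Prop :=
  ∀ (X : Set A) (u : W1) (v : W2), f X u v →
    (∀ n, M.V n u ↔ N.V n v) ∧
    (∀ x ∈ X,
      (∀ u', M.R x u u' → ∃ v', N.R x v v' ∧ f (X \ {x}) u' v') ∧
      (∀ v', N.R x v v' → ∃ u', M.R x u u' ∧ f (X \ {x}) u' v'))

/-- One step in an agent-alternating sequence. -/
def Step {A W : Type} (M : Kripke A W) : (Option A × W) → (Option A × W) → Prop :=
  fun x y => x.1 ≠ y.1 ∧ ∃ b : A, y.1 = some b ∧ M.R b x.2 y.2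

/-- Valid worlds of an agent-alternating unraveling. -/
def ValidSeq {A W : Type} (M : Kripke A W) (s : List (Option A × W)) : Prop :=
  s ≠ [] ∧ (∃ w, s.head? = some (none, w)) ∧ (∀ x ∈ s.tail, x.1 ≠ none) ∧
    List.Chain' (Step M) s

def UWorld {A W : Type} (M : Kripke A W) : Type := {s : List (Option A × W) // ValidSeq M s}

def lastEntry {A W : Type} {M : Kripke A W} (s : UWorld M) : Option A × W :=
  s.val.getLast s.prop.1

/-- N is an agent-alternating unraveling of M. -/
def IsAAUnraveling {A W : Type} (M : Kripke A W) (N : Kripke A (UWorld M)) : Prop :=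
  (∀ (b : A) (s : UWorld M), (lastEntry s).1 ≠ some b →
    ∀ t : UWorld M, N.R b s t ↔ ∃ w', M.R b (lastEntry s).2 w' ∧ t.val = s.val ++ [(some b, w')])
  ∧ (∀ n (s : UWorld M), N.V n s ↔ M.V n (lastEntry s).2)

/-- The canonical relation family between M and any of its agent-alternating unravelings. -/
def PFam {A W : Type} (M : Kripke A W) : Option A → W → UWorld M → Prop :=
  fun o u s => lastEntry s = (o, u)

/-- Finite agent-alternating bisimulation relations: `BisimN M N n (some a)` is ⇆_{-a}^n,
`BisimN M N n none` is ⇆_alt^n. -/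
def BisimN {A W1 W2 : Type} (M : Kripke A W1) (N : Kripke A W2) :
    ℕ → Option A → W1 → W2 → Prop
  | 0, _, u, v => ∀ n, M.V n u ↔ N.V n v
  | (n+1), o, u, v => (∀ m, M.V m u ↔ N.V m v) ∧
      ∀ b : A, o ≠ some b →
        (∀ u', M.R b u u' → ∃ v', N.R b v v' ∧ BisimN M N n (some b) u' v') ∧
        (∀ v', N.R b v v' → ∃ u', M.R b u u' ∧ BisimN M N n (some b) u' v')

/-- Standard n-bisimilarity. -/
def StdBisimN {A W1 W2 : Type} (M : Kripke A W1) (N : Kripke A W2) :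
    ℕ → W1 → W2 → Prop
  | 0, u, v => ∀ n, M.V n u ↔ N.V n v
  | (n+1), u, v => (∀ m, M.V m u ↔ N.V m v) ∧
      ∀ b : A,
        (∀ u', M.R b u u' → ∃ v', N.R b v v' ∧ StdBisimN M N n u' v') ∧
        (∀ v', N.R b v v' → ∃ u', M.R b u u' ∧ StdBisimN M N n u' v')

/-- invariance of L_{-a} and L_alt under agent-alternating bisimulation families. -/
theorem stmt1 {A W1 W2 : Type} (hA : ∃ a b : A, a ≠ b)
    (M : Kripke A W1) (N : Kripke A W2) (f : Option A → W1 → W2 → Prop)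
    (hf : IsAAFamily M N f) :
    (∀ (a : A) (u : W1) (v : W2), f (some a) u v →
      ∀ φ : Fm A, LMinus a φ → (Sat M u φ ↔ Sat N v φ)) ∧
    (∀ (u : W1) (v : W2), f none u v →
      ∀ φ : Fm A, LAlt φ → (Sat M u φ ↔ Sat N v φ)) := by
  have key : ∀ {a : A} {φ : Fm A}, LMinus a φ → ∀ u v,
      (f (some a) u v ∨ f none u v) → (Sat M u φ ↔ Sat N v φ) := by
    intro a φ h
    induction h with
    | atom a n =>
      intro u v huv
      rcases huv with h | h
      · exact (hf _ u v h).1 n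
      · exact (hf _ u v h).1 n
    | @box a x ψ hxa hψ ih =>
      intro u v huv
      have hzz : (∀ u', M.R x u u' → ∃ v', N.R x v v' ∧ f (some x) u' v') ∧
          (∀ v', N.R x v v' → ∃ u', M.R x u u' ∧ f (some x) u' v') := by
        rcases huv with h | h
        · exact (hf _ u v h).2 x (by simp [Ne.symm hxa])
        · exact (hf _ u v h).2 x (by simp)
      constructor
      · intro hs v' hv'
        obtain ⟨u', hu', hf'⟩ := hzz.2 v' hv'
        exact (ih u' v' (Or.inl hf')).mp (hs u' hu')
      · intro hs u' hu'
        obtain ⟨v', hv', hf'⟩ := hzz.1 u' hu'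
        exact (ih u' v' (Or.inl hf')).mpr (hs v' hv')
    | neg h ih =>
      intro u v huv
      exact not_congr (ih u v huv)
    | and h1 h2 ih1 ih2 =>
      intro u v huv
      exact and_congr (ih1 u v huv) (ih2 u v huv)
  constructor
  · intro a u v huv φ hφ
    exact key hφ u v (Or.inl huv)
  · intro u v huv φ hφ
    induction hφ with
    | atom n => exact (hf _ u v huv).1 n
    | chi a h => exact key h u v (Or.inr huv)
    | neg h ih => exact not_congr ih
    | and h1 h2 ih1 ih2 => exact and_congr ih1 ih2
end

section
/- For any Kripke model M and any agent-alternating unraveling N of M, the canonically defined family of relations {P_a^N}_{a ∈ A∪{alt}}, given by u P_a^N s iff the last element of the sequence s is ⟨a, u⟩, is an agent-alternating bisimulation family between M and N; consequently, for every world w of M, the pointed models M,w and N,⟨⟨alt,w⟩⟩ satisfy the same L_alt formulas. -/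
namespace IsAAFamily

variable {A W₁ W₂ : Type} {M : Kripke A W₁} {N : Kripke A W₂}
  {f : Option A → W₁ → W₂ → Prop}

theorem sat_iff_of_lMinus (hf : IsAAFamily M N f) {a : A} {φ : Fm A} (hφ : LMinus a φ)
    {o : Option A} {u : W₁} {v : W₂} (huv : f o u v) (ho : o = none ∨ o = some a) :
    Sat M u φ ↔ Sat N v φ := by
  induction hφ generalizing o u v with
  | atom a n => exact (hf o u v huv).1 n
  | @box a x ψ hxa _ ih =>
    have hox : o ≠ some x := by
      rcases ho with rfl | rfl
      · exact Option.some_ne_none x |>.symm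
      · exact fun h => hxa (Option.some_injective _ h).symm
    obtain ⟨zig, zag⟩ := (hf o u v huv).2 x hox
    constructor
    · intro h v' hv'
      obtain ⟨u', hu', hf'⟩ := zag v' hv'
      exact (ih hf' (Or.inr rfl)).1 (h u' hu')
    · intro h u' hu'
      obtain ⟨v', hv', hf'⟩ := zig u' hu'
      exact (ih hf' (Or.inr rfl)).2 (h v' hv')
  | neg _ ih => exact not_congr (ih huv ho)
  | and _ _ ih₁ ih₂ => exact and_congr (ih₁ huv ho) (ih₂ huv ho)

theorem sat_iff_of_lAlt (hf : IsAAFamily M N f) {u : W₁} {v : W₂} (huv : f none u v)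
    {φ : Fm A} (hφ : LAlt φ) : Sat M u φ ↔ Sat N v φ := by
  induction hφ with
  | atom n => exact (hf none u v huv).1 n
  | chi a h => exact hf.sat_iff_of_lMinus h huv (Or.inl rfl)
  | neg _ ih => exact not_congr ih
  | and _ _ ih₁ ih₂ => exact and_congr ih₁ ih₂

end IsAAFamily

section Unraveling

variable {A W : Type} {M : Kripke A W}

theorem validSeq_singleton (w : W) : ValidSeq M [(none, w)] :=
  ⟨List.cons_ne_nil _ _, ⟨w, rfl⟩, by simp, List.isChain_singleton _⟩

theorem ValidSeq.append_singleton {s : List (Option A × W)} (hs : ValidSeq M s)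
    {y : Option A × W} (hy : Step M (s.getLast hs.1) y) : ValidSeq M (s ++ [y]) := by
  obtain ⟨hne, ⟨w, hw⟩, htail, hchain⟩ := hs
  refine ⟨by simp, ⟨w, by rwa [List.head?_append_of_ne_nil _ hne]⟩, ?_, ?_⟩
  · obtain ⟨hne', b, hb, -⟩ := hy
    intro x hx
    rw [List.tail_append_singleton_of_ne_nil hne, List.mem_append, List.mem_singleton] at hx
    rcases hx with hx | rfl
    · exact htail x hx
    · simp [hb]
  · refine List.isChain_append.2 ⟨hchain, List.isChain_singleton _, ?_⟩
    intro x hx z hz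
    rw [List.getLast?_eq_some_getLast hne, Option.mem_some_iff] at hx
    rw [List.head?_cons, Option.mem_some_iff] at hz
    exact hx ▸ hz ▸ hy

theorem lastEntry_of_val_eq_append {t : UWorld M} {l : List (Option A × W)}
    {x : Option A × W} (ht : t.val = l ++ [x]) : lastEntry t = x := by
  have h : t.val.getLast? = some x := by rw [ht]; exact List.getLast?_concat
  rw [List.getLast?_eq_some_getLast t.prop.1] at h
  exact Option.some_injective _ h

theorem pFam_root (w : W) : PFam M none w ⟨[(none, w)], validSeq_singleton w⟩ :=
  lastEntry_of_val_eq_append (l := []) rfl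

theorem isAAFamily_pFam {N : Kripke A (UWorld M)} (hN : IsAAUnraveling M N) :
    IsAAFamily M N (PFam M) := by
  intro o u s hs
  refine ⟨fun n => by rw [hN.2 n s, hs], fun b hb => ?_⟩
  have hlast : (lastEntry s).1 ≠ some b := by rw [hs]; exact hb
  constructor
  · intro u' hu'
    have hstep : Step M (lastEntry s) (some b, u') := ⟨hlast, b, rfl, by rw [hs]; exact hu'⟩
    let t : UWorld M := ⟨s.val ++ [(some b, u')], s.prop.append_singleton hstep⟩
    refine ⟨t, (hN.1 b s hlast t).2 ⟨u', by rw [hs]; exact hu', rfl⟩, ?_⟩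
    exact lastEntry_of_val_eq_append (t := t) rfl
  · intro t ht
    obtain ⟨w', hw', ht⟩ := (hN.1 b s hlast t).1 ht
    rw [hs] at hw'
    exact ⟨w', hw', lastEntry_of_val_eq_append ht⟩

end Unraveling

theorem stmt2_general {A W : Type}
    (M : Kripke A W) (N : Kripke A (UWorld M)) (hN : IsAAUnraveling M N) :
    IsAAFamily M N (PFam M) ∧
    ∀ w : W, ∃ s : UWorld M, s.val = [(none, w)] ∧
      ∀ φ : Fm A, LAlt φ → (Sat M w φ ↔ Sat N s φ) := by
  have hfam := isAAFamily_pFam hN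
  exact ⟨hfam, fun w => ⟨_, rfl, fun _ hφ => hfam.sat_iff_of_lAlt (pFam_root w) hφ⟩⟩

/-- the canonical family is an agent-alternating bisimulation family between M
and any of its agent-alternating unravelings; hence roots agree with M on L_alt. -/
theorem stmt2 {A W : Type} (hA : ∃ a b : A, a ≠ b)
    (M : Kripke A W) (N : Kripke A (UWorld M)) (hN : IsAAUnraveling M N) :
    IsAAFamily M N (PFam M) ∧
    ∀ w : W, ∃ s : UWorld M, s.val = [(none, w)] ∧
      ∀ φ : Fm A, LAlt φ → (Sat M w φ ↔ Sat N s φ) :=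
  stmt2_general M N hN
end

section
/- Every agent-alternating formula satisfiable in some Kripke model is satisfiable in a Kripke model all of whose accessibility relations are transitive and Euclidean; moreover, if the original model has all relations serial, the transitive Euclidean model can be chosen with all relations serial as well. Consequently, K and K45 prove the same agent-alternating formulas, and KD and KD45 prove the same agent-alternating formulas. -/
/-!
Record in each world the agent `b` and the world `r` from which it was entered, and let the
`b`-successors of a world entered by `b` be (copies of) the `b`-successors of `r`, while every
other world keeps its own successors. Each relation of this unfolding is transitive and Euclidean,
and serial when the original one is. An agent-alternating formula never evaluates a `□_b` right
after a `b`-step, so at a world entered by no agent it cannot tell the unfolding from the original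
model. Together with completeness of the canonical model, this turns a K-model (KD-model) refuting
an agent-alternating formula into a K45-model (KD45-model) refuting it.
-/
namespace Fm

variable {A : Type}

def top : Fm A := imp (atom 0) (atom 0)

def conj (l : List (Fm A)) : Fm A := l.foldr and top

end Fm

section Propositional

variable {A : Type} {Ax Ax' : Fm A → Prop} {φ ψ : Fm A}

@[simp] lemma evalP_neg (v : Fm A → Bool) (φ : Fm A) : evalP v (.neg φ) = !evalP v φ := rfl

@[simp] lemma evalP_and (v : Fm A → Bool) (φ ψ : Fm A) :
    evalP v (.and φ ψ) = (evalP v φ && evalP v ψ) := rfl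

@[simp] lemma evalP_imp (v : Fm A → Bool) (φ ψ : Fm A) :
    evalP v (φ.imp ψ) = (!evalP v φ || evalP v ψ) := by
  simp [Fm.imp, Bool.not_and]

@[simp] lemma evalP_conj_nil (v : Fm A → Bool) : evalP v (Fm.conj []) = true := by
  simp [Fm.conj, Fm.top]

@[simp] lemma evalP_conj_cons (v : Fm A → Bool) (φ : Fm A) (l : List (Fm A)) :
    evalP v (Fm.conj (φ :: l)) = (evalP v φ && evalP v (Fm.conj l)) := rfl

lemma evalP_conj (v : Fm A → Bool) (l : List (Fm A)) :
    evalP v (Fm.conj l) = true ↔ ∀ ψ ∈ l, evalP v ψ = true := by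
  induction l with
  | nil => simp
  | cons φ l ih => simp [← ih]

lemma evalP_conj_append (v : Fm A → Bool) (l₁ l₂ : List (Fm A)) :
    evalP v (Fm.conj (l₁ ++ l₂)) = (evalP v (Fm.conj l₁) && evalP v (Fm.conj l₂)) := by
  induction l₁ with
  | nil => simp
  | cons φ l ih => simp [ih, Bool.and_assoc]

lemma Prv.of_taut_imp (t : Taut (φ.imp ψ)) (h : Prv Ax φ) : Prv Ax ψ :=
  (Prv.taut t).mp h

lemma Prv.mono (hAx : ∀ χ, Ax χ → Ax' χ) (h : Prv Ax φ) : Prv Ax' φ := by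
  induction h with
  | taut t => exact .taut t
  | ax h => exact .ax (hAx _ h)
  | k a φ ψ => exact .k a φ ψ
  | mp _ _ ih₁ ih₂ => exact ih₁.mp ih₂
  | nec a _ ih => exact .nec a ih

end Propositional

section Soundness

variable {A W : Type} {Ax Ax' : Fm A → Prop} {M : Kripke A W} {φ ψ : Fm A}

def Kripke.Models (M : Kripke A W) (Ax : Fm A → Prop) : Prop :=
  ∀ χ, Ax χ → ∀ w, Sat M w χ

lemma sat_imp {w : W} : Sat M w (φ.imp ψ) ↔ (Sat M w φ → Sat M w ψ) := by
  simp only [Fm.imp, Sat]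
  tauto

open Classical in
lemma evalP_decide_sat (w : W) (φ : Fm A) :
    evalP (fun ψ => decide (Sat M w ψ)) φ = true ↔ Sat M w φ := by
  induction φ with
  | neg φ ih => simp [Sat, ← ih]
  | and φ ψ ih₁ ih₂ => simp [Sat, ih₁, ih₂]
  | atom | box => simp [evalP]

theorem Prv.sound (hM : M.Models Ax) (h : Prv Ax φ) (w : W) : Sat M w φ := by
  induction h generalizing w with
  | taut t => exact (evalP_decide_sat w _).1 (t _)
  | ax h => exact hM _ h w
  | k a φ ψ => simp only [sat_imp, Sat]; exact fun h₁ h₂ v hv => h₁ v hv (h₂ v hv)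
  | mp _ _ ih₁ ih₂ => exact sat_imp.1 (ih₁ w) (ih₂ w)
  | nec a _ ih => exact fun v _ => ih v

lemma Kripke.Models.or (h : M.Models Ax) (h' : M.Models Ax') :
    M.Models (fun χ => Ax χ ∨ Ax' χ) := by
  rintro χ (hχ | hχ)
  exacts [h χ hχ, h' χ hχ]

lemma Kripke.models_ax4 (h : ∀ a, Transitive (M.R a)) : M.Models Ax4 := by
  rintro _ ⟨a, φ, rfl⟩ w
  exact sat_imp.2 fun hw v hv u hu => hw u (h a hv hu)

lemma Kripke.models_ax5 (h : ∀ a, Eucl (M.R a)) : M.Models Ax5 := by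
  rintro _ ⟨a, φ, rfl⟩ w
  exact sat_imp.2 fun hw v hv hv' => hw fun u hu => hv' u (h a w v u hv hu)

lemma Kripke.models_axD (h : ∀ a, Ser (M.R a)) : M.Models AxD := by
  rintro _ ⟨a, φ, rfl⟩ w
  obtain ⟨v, hv⟩ := h a w
  exact sat_imp.2 fun hw hw' => hw' v hv (hw v hv)

lemma Kripke.ser_of_models_axD (h : M.Models AxD) (a : A) : Ser (M.R a) := by
  intro w
  by_contra! hw
  exact sat_imp.1 (h _ ⟨a, .atom 0, rfl⟩ w) (fun v hv => (hw v hv).elim)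
    (fun v hv => (hw v hv).elim)

end Soundness

section Completeness

variable {A : Type} {Ax : Fm A → Prop} {Γ S : Set (Fm A)} {φ ψ : Fm A}

def Consistent (Ax : Fm A → Prop) (S : Set (Fm A)) : Prop :=
  ∀ l : List (Fm A), (∀ ψ ∈ l, ψ ∈ S) → ¬ Prv Ax (.neg (Fm.conj l))

def MaxConsistent (Ax : Fm A → Prop) (S : Set (Fm A)) : Prop :=
  Maximal (Consistent Ax) S

lemma consistent_isOfFiniteCharacter : Order.IsOfFiniteCharacter {S | Consistent Ax S} := by
  refine fun S => ⟨fun hS T hTS _ l hl => hS l fun ψ hψ => hTS (hl ψ hψ), fun h l hl => ?_⟩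
  exact h {ψ | ψ ∈ l} (fun ψ hψ => hl ψ hψ) l.finite_toSet l fun _ => id

lemma exists_maxConsistent_superset (h : Consistent Ax S) :
    ∃ Γ, S ⊆ Γ ∧ MaxConsistent Ax Γ :=
  consistent_isOfFiniteCharacter.exists_maximal h

lemma exists_prv_conj_imp_neg_of_not_consistent_insert (h : ¬ Consistent Ax (insert φ S)) :
    ∃ l : List (Fm A), (∀ ψ ∈ l, ψ ∈ S) ∧ Prv Ax ((Fm.conj l).imp φ.neg) := by
  classical
  simp only [Consistent, not_forall, not_not] at h
  obtain ⟨l, hl, hp⟩ := h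
  refine ⟨l.filter (· ≠ φ), fun ψ hψ => ?_, hp.of_taut_imp fun v => ?_⟩
  · simp only [List.mem_filter, decide_eq_true_eq] at hψ
    exact (hl ψ hψ.1).resolve_left hψ.2
  · simp only [evalP_imp, evalP_neg, Bool.not_not, Bool.or_eq_true, Bool.not_eq_true']
    refine or_iff_not_imp_right.2 fun h => ?_
    simp only [not_or, Bool.not_eq_false, evalP_conj, List.mem_filter, decide_eq_true_eq] at h ⊢
    intro ψ hψ
    by_cases hψφ : ψ = φ
    · exact hψφ ▸ h.2
    · exact h.1 ψ ⟨hψ, hψφ⟩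

namespace MaxConsistent

lemma mem_or_neg_mem (hΓ : MaxConsistent Ax Γ) (φ : Fm A) : φ ∈ Γ ∨ .neg φ ∈ Γ := by
  by_contra! h
  have hins : ∀ ψ ∉ Γ, ¬ Consistent Ax (insert ψ Γ) := fun ψ hψ hc =>
    hψ (hΓ.2 hc (Set.subset_insert ψ Γ) (Set.mem_insert ψ Γ))
  obtain ⟨l₁, hl₁, hp₁⟩ := exists_prv_conj_imp_neg_of_not_consistent_insert (hins φ h.1)
  obtain ⟨l₂, hl₂, hp₂⟩ := exists_prv_conj_imp_neg_of_not_consistent_insert (hins _ h.2)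
  refine hΓ.1 (l₁ ++ l₂) (fun ψ hψ => (List.mem_append.1 hψ).elim (hl₁ ψ) (hl₂ ψ)) ?_
  exact ((Prv.taut fun v => by simp [evalP_conj_append]; grind).mp hp₁).mp hp₂

lemma mem_of_prv_conj_imp (hΓ : MaxConsistent Ax Γ) {l : List (Fm A)}
    (hl : ∀ ψ ∈ l, ψ ∈ Γ) (h : Prv Ax ((Fm.conj l).imp φ)) : φ ∈ Γ := by
  refine (hΓ.mem_or_neg_mem φ).resolve_right fun hφ => hΓ.1 (φ.neg :: l) ?_ ?_
  · exact List.forall_mem_cons.2 ⟨hφ, hl⟩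
  · exact h.of_taut_imp fun v => by simp; grind

lemma mem_of_prv (hΓ : MaxConsistent Ax Γ) (h : Prv Ax φ) : φ ∈ Γ :=
  hΓ.mem_of_prv_conj_imp (l := []) (by simp) (h.of_taut_imp fun v => by simp)

lemma neg_mem_iff (hΓ : MaxConsistent Ax Γ) : .neg φ ∈ Γ ↔ φ ∉ Γ := by
  refine ⟨fun hn h => hΓ.1 [φ, φ.neg] ?_ (.taut fun v => by simp), ?_⟩
  · simp [h, hn]
  · exact (hΓ.mem_or_neg_mem φ).resolve_left

lemma and_mem_iff (hΓ : MaxConsistent Ax Γ) : .and φ ψ ∈ Γ ↔ φ ∈ Γ ∧ ψ ∈ Γ := by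
  refine ⟨fun h => ⟨?_, ?_⟩, fun h => ?_⟩
  · exact hΓ.mem_of_prv_conj_imp (l := [φ.and ψ]) (by simp [h]) (.taut fun v => by simp; grind)
  · exact hΓ.mem_of_prv_conj_imp (l := [φ.and ψ]) (by simp [h]) (.taut fun v => by simp; grind)
  · exact hΓ.mem_of_prv_conj_imp (l := [φ, ψ]) (by simp [h]) (.taut fun v => by simp; grind)

lemma box_mem_of_prv_conj_imp (hΓ : MaxConsistent Ax Γ) {a : A} {l : List (Fm A)}
    (hl : ∀ χ ∈ l, .box a χ ∈ Γ) (h : Prv Ax ((Fm.conj l).imp ψ)) : .box a ψ ∈ Γ := by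
  induction l generalizing ψ with
  | nil => exact hΓ.mem_of_prv (.nec a (h.of_taut_imp fun v => by simp))
  | cons χ l ih =>
    have hχψ : .box a (χ.imp ψ) ∈ Γ :=
      ih (fun χ hχ => hl χ (List.mem_cons_of_mem _ hχ)) (h.of_taut_imp fun v => by simp; grind)
    exact hΓ.mem_of_prv_conj_imp (l := [.box a (χ.imp ψ), .box a χ]) (by simp [hχψ, hl])
      ((Prv.k a χ ψ).of_taut_imp fun v => by simp; grind)

lemma exists_of_box_not_mem (hΓ : MaxConsistent Ax Γ) {a : A} (h : .box a ψ ∉ Γ) :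
    ∃ Δ, MaxConsistent Ax Δ ∧ (∀ χ, .box a χ ∈ Γ → χ ∈ Δ) ∧ ψ ∉ Δ := by
  have hcon : Consistent Ax (insert ψ.neg {χ | .box a χ ∈ Γ}) := by
    by_contra hc
    obtain ⟨l, hl, hp⟩ := exists_prv_conj_imp_neg_of_not_consistent_insert hc
    exact h (hΓ.box_mem_of_prv_conj_imp hl (hp.of_taut_imp fun v => by simp; grind))
  obtain ⟨Δ, hsub, hΔ⟩ := exists_maxConsistent_superset hcon
  exact ⟨Δ, hΔ, fun χ hχ => hsub (Set.mem_insert_of_mem _ hχ),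
    (hΔ.neg_mem_iff).1 (hsub (Set.mem_insert _ _))⟩

end MaxConsistent

def canonicalModel (Ax : Fm A → Prop) : Kripke A {Γ : Set (Fm A) // MaxConsistent Ax Γ} where
  R a Γ Δ := ∀ χ, .box a χ ∈ Γ.1 → χ ∈ Δ.1
  V n Γ := .atom n ∈ Γ.1

lemma sat_canonicalModel_iff (Γ : {Γ : Set (Fm A) // MaxConsistent Ax Γ}) :
    Sat (canonicalModel Ax) Γ φ ↔ φ ∈ Γ.1 := by
  induction φ generalizing Γ with
  | atom n => rfl
  | neg φ ih => exact (not_congr (ih Γ)).trans Γ.2.neg_mem_iff.symm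
  | and φ ψ ih₁ ih₂ => exact (and_congr (ih₁ Γ) (ih₂ Γ)).trans Γ.2.and_mem_iff.symm
  | box a φ ih =>
    refine ⟨fun h => ?_, fun h Δ hΔ => (ih Δ).2 (hΔ φ h)⟩
    by_contra hφ
    obtain ⟨Δ, hΔ, hR, hφΔ⟩ := Γ.2.exists_of_box_not_mem hφ
    exact hφΔ ((ih ⟨Δ, hΔ⟩).1 (h ⟨Δ, hΔ⟩ hR))

lemma canonicalModel_models : (canonicalModel Ax).Models Ax :=
  fun _ h Γ => (sat_canonicalModel_iff Γ).2 (Γ.2.mem_of_prv (.ax h))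

theorem Prv.complete (h : ∀ (W : Type) (M : Kripke A W), M.Models Ax → ∀ w, Sat M w φ) :
    Prv Ax φ := by
  by_contra hφ
  have hcon : Consistent Ax {φ.neg} := fun l hl hp => hφ <| hp.of_taut_imp fun v => by
    simp only [evalP_imp, evalP_neg, Bool.not_not, Bool.or_eq_true]
    refine or_iff_not_imp_right.2 fun hv => (evalP_conj v l).2 fun ψ hψ => ?_
    rw [Set.mem_singleton_iff.1 (hl ψ hψ)]
    simpa using hv
  obtain ⟨Γ, hsub, hΓ⟩ := exists_maxConsistent_superset hcon
  exact hΓ.neg_mem_iff.1 (hsub rfl)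
    ((sat_canonicalModel_iff ⟨Γ, hΓ⟩).1 (h _ _ canonicalModel_models ⟨Γ, hΓ⟩))

end Completeness

section Unfolding

variable {A W : Type} [DecidableEq A] {a b c : A} {φ : Fm A}

/-- A world `(u, some (b, r))` is a copy of `u` entered from `r` by a `b`-step: its `b`-anchor
is `r`. For every other agent, and for worlds `(u, none)`, the anchor is `u` itself. -/
def anchor (b : A) (x : W × Option (A × W)) : W :=
  match x.2 with
  | some (c, r) => if c = b then r else x.1
  | none => x.1

@[simp] lemma anchor_some_self (b : A) (u r : W) : anchor b (u, some (b, r)) = r := if_pos rfl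

lemma anchor_some_of_ne (h : c ≠ b) (u r : W) : anchor b (u, some (c, r)) = u := if_neg h

def Kripke.unfold (M : Kripke A W) : Kripke A (W × Option (A × W)) where
  R b x y := M.R b (anchor b x) y.1 ∧ y.2 = some (b, anchor b x)
  V n x := M.V n x.1

variable (M : Kripke A W)

lemma Kripke.unfold_transitive (b : A) : Transitive (M.unfold.R b) := by
  rintro x ⟨v, p⟩ z ⟨-, rfl⟩ hz
  simpa [Kripke.unfold] using hz

lemma Kripke.unfold_eucl (b : A) : Eucl (M.unfold.R b) := by
  rintro x ⟨v, p⟩ z ⟨-, rfl⟩ hz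
  simpa [Kripke.unfold] using hz

lemma Kripke.unfold_ser (h : Ser (M.R b)) : Ser (M.unfold.R b) := fun x =>
  let ⟨v, hv⟩ := h (anchor b x)
  ⟨(v, some (b, anchor b x)), hv, rfl⟩

lemma Kripke.unfold_models_ax4_or_ax5 : M.unfold.Models (fun χ => Ax4 χ ∨ Ax5 χ) :=
  (Kripke.models_ax4 M.unfold_transitive).or (Kripke.models_ax5 M.unfold_eucl)

lemma sat_unfold_iff_of_lMinus (h : LMinus a φ) {x : W × Option (A × W)}
    (hx : ∀ b ≠ a, anchor b x = x.1) : Sat M.unfold x φ ↔ Sat M x.1 φ := by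
  induction h generalizing x with
  | atom => rfl
  | @box a b ψ hba _ ih =>
    have hxb := hx b hba
    have hy (v : W) : ∀ c ≠ b, anchor c (v, some (b, x.1)) = v :=
      fun c hc => anchor_some_of_ne hc.symm v x.1
    constructor
    · intro h' v hv
      exact (ih (hy v)).1 (h' (v, some (b, x.1)) ⟨hxb ▸ hv, hxb ▸ rfl⟩)
    · rintro h' ⟨v, _⟩ ⟨hv, rfl⟩
      simp only [hxb] at hv ⊢
      exact (ih (hy v)).2 (h' v hv)
  | neg _ ih => exact not_congr (ih hx)
  | and _ _ ih₁ ih₂ => exact and_congr (ih₁ hx) (ih₂ hx)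

lemma sat_unfold_root_iff (h : LAlt φ) (w : W) : Sat M.unfold (w, none) φ ↔ Sat M w φ := by
  induction h with
  | atom => rfl
  | chi a h => exact sat_unfold_iff_of_lMinus M h fun _ _ => rfl
  | neg _ ih => exact not_congr ih
  | and _ _ ih₁ ih₂ => exact and_congr ih₁ ih₂

theorem prv_of_prv_of_unfold_models {Ax Ax' : Fm A → Prop}
    (hM : ∀ (W : Type) (M : Kripke A W), M.Models Ax → M.unfold.Models Ax') (hφ : LAlt φ)
    (h : Prv Ax' φ) : Prv Ax φ :=
  Prv.complete fun W M hM' w => (sat_unfold_root_iff M hφ w).1 (h.sound (hM W M hM') _)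

end Unfolding

theorem stmt3_general {A : Type} :
    (∀ (φ : Fm A), LAlt φ →
      ∀ (W : Type) (M : Kripke A W) (w : W), Sat M w φ →
        ∃ (W' : Type) (M' : Kripke A W') (w' : W'),
          (∀ a : A, Transitive (M'.R a)) ∧ (∀ a : A, Eucl (M'.R a)) ∧
          ((∀ a : A, Ser (M.R a)) → ∀ a : A, Ser (M'.R a)) ∧ Sat M' w' φ) ∧
    (∀ φ : Fm A, LAlt φ → (Prv AxNone φ ↔ Prv (fun χ => Ax4 χ ∨ Ax5 χ) φ)) ∧
    (∀ φ : Fm A, LAlt φ → (Prv AxD φ ↔ Prv (fun χ => AxD χ ∨ Ax4 χ ∨ Ax5 χ) φ)) := by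
  classical
  refine ⟨fun φ hφ W M w hw => ?_, fun φ hφ => ⟨?_, ?_⟩, fun φ hφ => ⟨?_, ?_⟩⟩
  · exact ⟨_, M.unfold, (w, none), M.unfold_transitive, M.unfold_eucl,
      fun hser a => M.unfold_ser (hser a), (sat_unfold_root_iff M hφ w).2 hw⟩
  · exact Prv.mono fun _ h => h.elim
  · exact prv_of_prv_of_unfold_models (fun _ M _ => M.unfold_models_ax4_or_ax5) hφ
  · exact Prv.mono fun _ => Or.inl
  · refine prv_of_prv_of_unfold_models (fun _ M hM => ?_) hφ
    exact (Kripke.models_axD fun a => M.unfold_ser (M.ser_of_models_axD hM a)).or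
      M.unfold_models_ax4_or_ax5

/-- satisfiable agent-alternating formulas are satisfiable on transitive Euclidean
models (preserving seriality); hence K = K45 and KD = KD45 on agent-alternating formulas. -/
theorem stmt3 {A : Type} (hA : ∃ a b : A, a ≠ b) :
    (∀ (φ : Fm A), LAlt φ →
      ∀ (W : Type) (M : Kripke A W) (w : W), Sat M w φ →
        ∃ (W' : Type) (M' : Kripke A W') (w' : W'),
          (∀ a : A, Transitive (M'.R a)) ∧ (∀ a : A, Eucl (M'.R a)) ∧
          ((∀ a : A, Ser (M.R a)) → ∀ a : A, Ser (M'.R a)) ∧ Sat M' w' φ) ∧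
    (∀ φ : Fm A, LAlt φ → (Prv AxNone φ ↔ Prv (fun χ => Ax4 χ ∨ Ax5 χ) φ)) ∧
    (∀ φ : Fm A, LAlt φ → (Prv AxD φ ↔ Prv (fun χ => AxD χ ∨ Ax4 χ ∨ Ax5 χ) φ)) :=
  stmt3_general
end

section
/- If {⇆_X}_{X ⊆ A} is an agent-nonrepeating bisimulation family between Kripke models M and N, then for every X ⊆ A, u ⇆_X v implies that M,u and N,v satisfy exactly the same formulas of the fragment L_X. -/
/-- invariance of L_X under agent-nonrepeating bisimulation families. -/
theorem stmt9 {A W1 W2 : Type} (hA : ∃ a b : A, a ≠ b)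
    (M : Kripke A W1) (N : Kripke A W2) (f : Set A → W1 → W2 → Prop)
    (hf : IsNRFamily M N f) :
    ∀ (X : Set A) (u : W1) (v : W2), f X u v →
      ∀ φ : Fm A, LX X φ → (Sat M u φ ↔ Sat N v φ) := by
  intro X u v huv φ hφ
  induction hφ generalizing u v with
  | atom X n => exact (hf X u v huv).1 n
  | box hx hψ ih =>
    constructor
    · intro h v' hv'
      obtain ⟨u', hu', h'⟩ := ((hf _ u v huv).2 _ hx).2 v' hv'
      exact (ih u' v' h').mp (h u' hu')
    · intro h u' hu'
      obtain ⟨v', hv', h'⟩ := ((hf _ u v huv).2 _ hx).1 u' hu'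
      exact (ih u' v' h').mpr (h v' hv')
  | neg _ ih => exact not_congr (ih u v huv)
  | and _ _ ih1 ih2 => exact and_congr (ih1 u v huv) (ih2 u v huv)
end
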